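/- Let A be a bounded injective linear operator between Hilbert spaces with Ay = f, and y = (A*A)^p w, ‖w‖ ≤ k, p ∈ (0,1). With the choice a(δ) = b_p·δ^(2/(2p+1)) where b_p = (4pc_p k)^(-2/(2p+1)) and c_p = p^p(1-p)^(1-p), the regularized solution u_δ = (A*A + a(δ)I)^{-1}A* f_δ satisfies ‖u_δ - y‖ ≤ C_p·δ^(2p/(2p+1)) whenever ‖f_δ - f‖ ≤ δ, where C_p = 1/(2√b_p) + c_p·k·b_p^p. -/

import Mathlib

open ContinuousLinearMap

/-! With `T = A*A`, `R = (T + a)⁻¹` and `y = T^p w`, the error splits as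
`u_δ - y = R A* (f_δ - f) - a R T^p w`, a noise term plus a bias term. Both operators are
functions of `T ≥ 0`, so their norms are bounded by the supremum of their symbols over `s ≥ 0`:
by the C*-identity `‖R A*‖² = ‖R T R‖ ≤ sup s / (s + a)² = 1 / (4a)`, and by weighted AM–GM
`a s^p / (s + a) ≤ c_p a^p`. Hence `‖u_δ - y‖ ≤ δ / (2√a) + c_p k a^p`, and the choice
`a = b_p δ^(2/(2p+1))` makes both terms of order `δ^(2p/(2p+1))`. -/

lemma div_add_sq_le_inv_four_mul {a s : ℝ} (ha : 0 < a) (hs : 0 ≤ s) :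
    s / (s + a) ^ 2 ≤ (4 * a)⁻¹ := by
  rw [div_le_iff₀ (by positivity), inv_mul_eq_div, le_div_iff₀ (by positivity)]
  nlinarith [sq_nonneg (s - a)]

lemma rpow_mul_rpow_one_sub_le {p s a : ℝ} (hp0 : 0 < p) (hp1 : p < 1) (hs : 0 ≤ s)
    (ha : 0 ≤ a) :
    s ^ p * a ^ (1 - p) ≤ p ^ p * (1 - p) ^ (1 - p) * (s + a) := by
  have hq : 0 < 1 - p := sub_pos.mpr hp1
  have h := Real.geom_mean_le_arith_mean2_weighted hp0.le hq.le
    (div_nonneg hs hp0.le) (div_nonneg ha hq.le) (add_sub_cancel p 1)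
  rw [Real.div_rpow hs hp0.le, Real.div_rpow ha hq.le, mul_div_cancel₀ _ hp0.ne',
    mul_div_cancel₀ _ hq.ne', div_mul_div_comm, div_le_iff₀ (by positivity)] at h
  linarith

lemma mul_rpow_div_add_le {p s a : ℝ} (hp0 : 0 < p) (hp1 : p < 1) (hs : 0 ≤ s) (ha : 0 < a) :
    a * s ^ p / (s + a) ≤ p ^ p * (1 - p) ^ (1 - p) * a ^ p := by
  have ha_split : a = a ^ p * a ^ (1 - p) := by
    rw [← Real.rpow_add ha, add_sub_cancel, Real.rpow_one]
  rw [div_le_iff₀ (by positivity)]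
  calc a * s ^ p = a ^ p * (s ^ p * a ^ (1 - p)) := by nth_rw 1 [ha_split]; ring
    _ ≤ a ^ p * (p ^ p * (1 - p) ^ (1 - p) * (s + a)) :=
      mul_le_mul_of_nonneg_left (rpow_mul_rpow_one_sub_le hp0 hp1 hs ha.le) (by positivity)
    _ = _ := by ring

lemma sqrt_mul_rpow_mul_rpow_eq {p b δ : ℝ} (hp : 0 < p) (hb : 0 ≤ b) (hδ : 0 < δ) :
    √(b * δ ^ (2 / (2 * p + 1))) * δ ^ (2 * p / (2 * p + 1)) = √b * δ := by
  have h2p1 : 2 * p + 1 ≠ 0 := by positivity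
  rw [Real.sqrt_mul hb, Real.sqrt_eq_rpow (δ ^ _), ← Real.rpow_mul hδ.le, mul_assoc,
    ← Real.rpow_add hδ]
  congr
  convert Real.rpow_one δ using 2
  field_simp
  ring

lemma mul_rpow_rpow_eq {p b δ : ℝ} (hb : 0 ≤ b) (hδ : 0 < δ) :
    (b * δ ^ (2 / (2 * p + 1))) ^ p = b ^ p * δ ^ (2 * p / (2 * p + 1)) := by
  rw [Real.mul_rpow hb (by positivity), ← Real.rpow_mul hδ.le, div_mul_eq_mul_div, mul_comm 2 p]

lemma inv_two_sqrt_mul_add_mul_rpow_mul_eq {p b δ : ℝ} (hp : 0 < p) (hb : 0 < b) (hδ : 0 < δ)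
    (c k : ℝ) :
    1 / (2 * √(b * δ ^ (2 / (2 * p + 1)))) * δ + c * (b * δ ^ (2 / (2 * p + 1))) ^ p * k
      = (1 / (2 * √b) + c * k * b ^ p) * δ ^ (2 * p / (2 * p + 1)) := by
  have hsqrt := sqrt_mul_rpow_mul_rpow_eq hp hb.le hδ
  have hsqrt_pos : 0 < √(b * δ ^ (2 / (2 * p + 1))) := by positivity
  rw [mul_rpow_rpow_eq hb.le hδ]
  field_simp
  linear_combination -hsqrt

section Resolvent

variable {H : Type*} [NormedAddCommGroup H] [InnerProductSpace ℂ H] [CompleteSpace H]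
  {T : H →L[ℂ] H} {a : ℝ}

lemma continuousOn_inv_add_spectrum (hT : 0 ≤ T) (ha : 0 < a) :
    ContinuousOn (fun s : ℝ => (s + a)⁻¹) (spectrum ℝ T) :=
  (continuousOn_id.add continuousOn_const).inv₀ fun _ hs =>
    (add_pos_of_nonneg_of_pos (spectrum_nonneg_of_nonneg hT hs) ha).ne'

lemma cfc_inv_add_mul_add_smul_one (hT : 0 ≤ T) (ha : 0 < a) :
    cfc (fun s : ℝ => (s + a)⁻¹) T * (T + a • 1) = 1 := by
  have hadd : T + a • 1 = cfc (fun s : ℝ => s + a) T := by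
    rw [cfc_add_const a (fun s : ℝ => s) T, cfc_id' ℝ T, Algebra.algebraMap_eq_smul_one]
  rw [hadd, ← cfc_mul _ _ T (continuousOn_inv_add_spectrum hT ha)]
  refine (cfc_congr fun s hs => inv_mul_cancel₀ ?_).trans (cfc_const_one ℝ T)
  exact (add_pos_of_nonneg_of_pos (spectrum_nonneg_of_nonneg hT hs) ha).ne'

lemma eq_cfc_inv_add_apply_of_add_smul_one_apply_eq (hT : 0 ≤ T) (ha : 0 < a) {u v : H}
    (h : (T + a • 1) u = v) : u = cfc (fun s : ℝ => (s + a)⁻¹) T v := by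
  calc u = (cfc (fun s : ℝ => (s + a)⁻¹) T * (T + a • 1)) u := by
        rw [cfc_inv_add_mul_add_smul_one hT ha, one_apply_eq_self]
    _ = cfc (fun s : ℝ => (s + a)⁻¹) T v := by rw [← h]; rfl

lemma smul_cfc_inv_add_mul_cfc_rpow (hT : 0 ≤ T) (ha : 0 < a) {p : ℝ} (hp : 0 ≤ p) :
    a • (cfc (fun s : ℝ => (s + a)⁻¹) T * cfc (fun s : ℝ => s ^ p) T)
      = cfc (fun s : ℝ => a * s ^ p / (s + a)) T := by
  have hcont := continuousOn_inv_add_spectrum hT ha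
  rw [← cfc_mul _ _ T hcont,
    ← cfc_smul a (fun s : ℝ => (s + a)⁻¹ * s ^ p) T (hcont.mul (by fun_prop))]
  exact cfc_congr fun _ _ => by simp only [smul_eq_mul]; ring

lemma norm_cfc_mul_rpow_div_add_le (hT : 0 ≤ T) (ha : 0 < a) {p : ℝ} (hp0 : 0 < p)
    (hp1 : p < 1) :
    ‖cfc (fun s : ℝ => a * s ^ p / (s + a)) T‖ ≤ p ^ p * (1 - p) ^ (1 - p) * a ^ p := by
  have hq : 0 < 1 - p := sub_pos.mpr hp1
  refine norm_cfc_le (by positivity) fun s hs => ?_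
  have hs0 := spectrum_nonneg_of_nonneg hT hs
  rw [Real.norm_of_nonneg (by positivity)]
  exact mul_rpow_div_add_le hp0 hp1 hs0 ha

variable {K : Type*} [NormedAddCommGroup K] [InnerProductSpace ℂ K] [CompleteSpace K]

lemma adjoint_comp_self_nonneg (A : H →L[ℂ] K) : 0 ≤ adjoint A ∘L A :=
  (nonneg_iff_isPositive _).mpr (isPositive_adjoint_comp_self A)

lemma norm_cfc_inv_add_comp_adjoint_le (A : H →L[ℂ] K) (ha : 0 < a) :
    ‖cfc (fun s : ℝ => (s + a)⁻¹) (adjoint A ∘L A) ∘L adjoint A‖ ≤ 1 / (2 * √a) := by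
  set T := adjoint A ∘L A
  set R := cfc (fun s : ℝ => (s + a)⁻¹) T
  have hT : 0 ≤ T := adjoint_comp_self_nonneg A
  have hcont := continuousOn_inv_add_spectrum hT ha
  have hR : adjoint R = R := (cfc_predicate (fun s : ℝ => (s + a)⁻¹) T).adjoint_eq
  have hsq : ‖R ∘L adjoint A‖ ^ 2 = ‖cfc (fun s : ℝ => s / (s + a) ^ 2) T‖ := by
    have h := norm_adjoint_comp_self (adjoint (R ∘L adjoint A))
    rw [adjoint_adjoint, LinearIsometryEquiv.norm_map, adjoint_comp, adjoint_adjoint, hR] at h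
    rw [sq, ← h]
    congr 1
    calc (R ∘L adjoint A) ∘L A ∘L R = R * T * R := rfl
      _ = cfc (fun s : ℝ => (s + a)⁻¹ * s * (s + a)⁻¹) T := by
        rw [cfc_mul (fun s : ℝ => (s + a)⁻¹ * s) (fun s : ℝ => (s + a)⁻¹) T
            (hcont.mul continuousOn_id) hcont,
          cfc_mul (fun s : ℝ => (s + a)⁻¹) (fun s : ℝ => s) T hcont continuousOn_id, cfc_id' ℝ T]
      _ = cfc (fun s : ℝ => s / (s + a) ^ 2) T :=
        cfc_congr fun _ _ => by rw [div_eq_mul_inv, ← inv_pow]; ring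
  have hnorm : ‖cfc (fun s : ℝ => s / (s + a) ^ 2) T‖ ≤ (1 / (2 * √a)) ^ 2 := by
    have h4a : (1 / (2 * √a)) ^ 2 = (4 * a)⁻¹ := by
      rw [div_pow, mul_pow, Real.sq_sqrt ha.le]; norm_num
    rw [h4a]
    exact norm_cfc_le (by positivity) fun s hs => by
      have hs0 := spectrum_nonneg_of_nonneg hT hs
      rw [Real.norm_of_nonneg (by positivity)]
      exact div_add_sq_le_inv_four_mul ha hs0
  exact (pow_le_pow_iff_left₀ (norm_nonneg _) (by positivity) two_ne_zero).mp (hsq ▸ hnorm)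

lemma sub_eq_of_adjoint_comp_self_add_smul_one_apply_eq (A : H →L[ℂ] K) (ha : 0 < a) {u : H}
    {g : K} (hu : (adjoint A ∘L A + a • 1) u = adjoint A g) (y : H) :
    u - y = (cfc (fun s : ℝ => (s + a)⁻¹) (adjoint A ∘L A) ∘L adjoint A) (g - A y)
      - a • cfc (fun s : ℝ => (s + a)⁻¹) (adjoint A ∘L A) y := by
  have hT := adjoint_comp_self_nonneg A
  have hy := eq_cfc_inv_add_apply_of_add_smul_one_apply_eq hT ha
    (v := (adjoint A ∘L A + a • 1) y) rfl
  rw [eq_cfc_inv_add_apply_of_add_smul_one_apply_eq hT ha hu]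
  nth_rw 1 [hy]
  simp only [map_sub, add_apply, smul_apply, one_apply_eq_self, comp_apply, map_add,
    map_smul_of_tower]
  abel

end Resolvent

theorem optimal_rate_regularization_general (H K : Type*)
    [NormedAddCommGroup H] [InnerProductSpace ℂ H] [CompleteSpace H]
    [NormedAddCommGroup K] [InnerProductSpace ℂ K] [CompleteSpace K]
    (A : H →L[ℂ] K)
    (p k δ : ℝ) (hp0 : 0 < p) (hp1 : p < 1) (hk : 0 < k) (hδ : 0 < δ)
    (w y : H) (hw : ‖w‖ ≤ k)
    (hy : y = cfc (fun s : ℝ => s ^ p) ((ContinuousLinearMap.adjoint A) ∘L A) w)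
    (f fδ : K) (hf : A y = f) (hfδ : ‖fδ - f‖ ≤ δ)
    (c b C : ℝ)
    (hc : c = p ^ p * (1 - p) ^ (1 - p))
    (hb : b = (4 * p * c * k) ^ (-(2 / (2 * p + 1))))
    (hC : C = 1 / (2 * Real.sqrt b) + c * k * b ^ p)
    (uδ : H)
    (hu : ((ContinuousLinearMap.adjoint A) ∘L A
        + (b * δ ^ (2 / (2 * p + 1))) • (1 : H →L[ℂ] H)) uδ
        = (ContinuousLinearMap.adjoint A) fδ) :
    ‖uδ - y‖ ≤ C * δ ^ (2 * p / (2 * p + 1)) := by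
  subst hc hC
  have hb0 : 0 < b := hb ▸ by positivity
  set a := b * δ ^ (2 / (2 * p + 1))
  have ha : 0 < a := by positivity
  have hT := adjoint_comp_self_nonneg A
  have hbias : a • cfc (fun s : ℝ => (s + a)⁻¹) (adjoint A ∘L A) y
      = cfc (fun s : ℝ => a * s ^ p / (s + a)) (adjoint A ∘L A) w := by
    rw [hy, ← smul_cfc_inv_add_mul_cfc_rpow hT ha hp0.le]
    rfl
  calc ‖uδ - y‖
      = ‖(cfc (fun s : ℝ => (s + a)⁻¹) (adjoint A ∘L A) ∘L adjoint A) (fδ - f)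
          - cfc (fun s : ℝ => a * s ^ p / (s + a)) (adjoint A ∘L A) w‖ := by
        rw [sub_eq_of_adjoint_comp_self_add_smul_one_apply_eq A ha hu, hf, hbias]
    _ ≤ 1 / (2 * √a) * δ + p ^ p * (1 - p) ^ (1 - p) * a ^ p * k :=
        (norm_sub_le _ _).trans <| add_le_add
          (le_of_opNorm_le_of_le _ (norm_cfc_inv_add_comp_adjoint_le A ha) hfδ)
          (le_of_opNorm_le_of_le _ (norm_cfc_mul_rpow_div_add_le hT ha hp0 hp1) hw)
    _ = _ := inv_two_sqrt_mul_add_mul_rpow_mul_eq hp0 hb0 hδ _ _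

/-- Optimal-rate error estimate: with `a(δ) = b_p δ^(2/(2p+1))`,
the regularized solution `u_δ = (A*A + a(δ)I)⁻¹ A* fδ` satisfies
`‖u_δ - y‖ ≤ C_p δ^(2p/(2p+1))` under the source condition `y = (A*A)^p w`, `‖w‖ ≤ k`. -/
theorem optimal_rate_regularization (H K : Type*)
    [NormedAddCommGroup H] [InnerProductSpace ℂ H] [CompleteSpace H]
    [NormedAddCommGroup K] [InnerProductSpace ℂ K] [CompleteSpace K]
    (A : H →L[ℂ] K) (hA : Function.Injective A)
    (p k δ : ℝ) (hp0 : 0 < p) (hp1 : p < 1) (hk : 0 < k) (hδ : 0 < δ)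
    (w y : H) (hw : ‖w‖ ≤ k)
    (hy : y = cfc (fun s : ℝ => s ^ p) ((ContinuousLinearMap.adjoint A) ∘L A) w)
    (f fδ : K) (hf : A y = f) (hfδ : ‖fδ - f‖ ≤ δ)
    (c b C : ℝ)
    (hc : c = p ^ p * (1 - p) ^ (1 - p))
    (hb : b = (4 * p * c * k) ^ (-(2 / (2 * p + 1))))
    (hC : C = 1 / (2 * Real.sqrt b) + c * k * b ^ p)
    (uδ : H)
    (hu : ((ContinuousLinearMap.adjoint A) ∘L A
        + (b * δ ^ (2 / (2 * p + 1))) • (1 : H →L[ℂ] H)) uδ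
        = (ContinuousLinearMap.adjoint A) fδ) :
    ‖uδ - y‖ ≤ C * δ ^ (2 * p / (2 * p + 1)) :=
  optimal_rate_regularization_general H K A p k δ hp0 hp1 hk hδ w y hw hy f fδ hf hfδ c b C hc hb hC
    uδ hu
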